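/- For an irreducible stochastic matrix T with L = I - T, the total weight q_j of spanning converging trees to vertex j in the associated digraph equals the (j,j) cofactor of L, i.e., q_j = det(L with row j and column j deleted), and this quantity is strictly positive for every j. -/

import Mathlib

open scoped Classical
open Finset Matrix

namespace MFPT

variable {n : ℕ}

/-- The step relation of a functional subgraph: `a → b` when `F a = some b`. -/
def Step (F : Fin n → Option (Fin n)) (a b : Fin n) : Prop := F a = some b

/-- `F` is a spanning in-forest of the weighted digraph with weight matrix `w`:
every chosen arc is a genuine (loopless, positive-weight) arc and there is no directed cycle.
Each weak component of such a functional digraph is a converging tree (root = the vertex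
mapped to `none`). -/
def IsInForest (w : Matrix (Fin n) (Fin n) ℝ) (F : Fin n → Option (Fin n)) : Prop :=
  (∀ v u, F v = some u → v ≠ u ∧ 0 < w v u) ∧ ∀ v, ¬ Relation.TransGen (Step F) v v

/-- Weight of a spanning subgraph: the product of its arc weights. -/
noncomputable def forestWeight (w : Matrix (Fin n) (Fin n) ℝ) (F : Fin n → Option (Fin n)) : ℝ :=
  ∏ v, (F v).elim 1 (fun u => w v u)

/-- Number of arcs of a functional subgraph. -/
def arcCount (F : Fin n → Option (Fin n)) : ℕ :=
  (Finset.univ.filter fun v => (F v).isSome).card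

/-- Vertex `i` belongs to the tree of `F` converging to (rooted at) `j`. -/
def InTreeOf (F : Fin n → Option (Fin n)) (i j : Fin n) : Prop :=
  Relation.ReflTransGen (Step F) i j ∧ F j = none

/-- `σ_k`: total weight of spanning in-forests with `k` arcs. -/
noncomputable def sigmaW (w : Matrix (Fin n) (Fin n) ℝ) (k : ℕ) : ℝ :=
  ∑ F : Fin n → Option (Fin n),
    if IsInForest w F ∧ arcCount F = k then forestWeight w F else 0

/-- `Q_k`: the matrix whose `(i,j)` entry is the total weight of in-forests with `k` arcs
in which `i` belongs to the tree converging to `j`. -/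
noncomputable def Qmat (w : Matrix (Fin n) (Fin n) ℝ) (k : ℕ) : Matrix (Fin n) (Fin n) ℝ :=
  Matrix.of fun i j => ∑ F : Fin n → Option (Fin n),
    if IsInForest w F ∧ arcCount F = k ∧ InTreeOf F i j then forestWeight w F else 0

/-- `q_j`: total weight of spanning trees converging to `j` (in-forests with `n-1` arcs
whose unique root is `j`). -/
noncomputable def treeWeight (w : Matrix (Fin n) (Fin n) ℝ) (j : Fin n) : ℝ :=
  ∑ F : Fin n → Option (Fin n),
    if IsInForest w F ∧ arcCount F = n - 1 ∧ F j = none then forestWeight w F else 0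

/-- `f_{ij}`: total weight of 2-tree in-forests having one tree containing `i` and the other
tree converging to `j`. -/
noncomputable def fWeight (w : Matrix (Fin n) (Fin n) ℝ) (i j : Fin n) : ℝ :=
  ∑ F : Fin n → Option (Fin n),
    if IsInForest w F ∧ arcCount F = n - 2 ∧ F j = none ∧
        ¬ Relation.ReflTransGen (Step F) i j
      then forestWeight w F else 0

/-- The Laplacian matrix of the weighted digraph with weight matrix `w`. -/
noncomputable def lap (w : Matrix (Fin n) (Fin n) ℝ) : Matrix (Fin n) (Fin n) ℝ :=
  Matrix.of fun i j => if i = j then ∑ k ∈ Finset.univ.erase i, w i k else - w i j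

/-- `X` is the group inverse of `L`. -/
def IsGroupInverse (L X : Matrix (Fin n) (Fin n) ℝ) : Prop :=
  L * X * L = L ∧ X * L * X = X ∧ L * X = X * L

/-- `T` is (row-)stochastic. -/
def IsStochastic (T : Matrix (Fin n) (Fin n) ℝ) : Prop :=
  (∀ i j, 0 ≤ T i j) ∧ ∀ i, ∑ j, T i j = 1

/-- Irreducibility of `T`. -/
def IsIrreducible (T : Matrix (Fin n) (Fin n) ℝ) : Prop :=
  ∀ i j, ∃ k : ℕ, 0 < (T ^ k) i j

/-- Ergodicity (primitivity) of `T`: some power of `T` is entrywise positive. -/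
def IsErgodic (T : Matrix (Fin n) (Fin n) ℝ) : Prop :=
  ∃ N : ℕ, ∀ i j, 0 < (T ^ N) i j

/-- `π` is a stationary distribution of `T`. -/
def IsStationary (T : Matrix (Fin n) (Fin n) ℝ) (π : Fin n → ℝ) : Prop :=
  (∀ i, 0 ≤ π i) ∧ (∑ i, π i = 1) ∧ ∀ j, ∑ i, π i * T i j = π j

/-- Probability of the trajectory `p` of length `k` under transition matrix `T`. -/
noncomputable def pathProb (T : Matrix (Fin n) (Fin n) ℝ) (k : ℕ)
    (p : Fin (k + 1) → Fin n) : ℝ :=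
  ∏ t : Fin k, T (p t.castSucc) (p t.succ)

/-- `Pr(F_{ij} = k)`: probability that, starting at `i`, the chain first reaches `j`
(at a step `p ≥ 1`) exactly at time `k`. -/
noncomputable def firstPassageProb (T : Matrix (Fin n) (Fin n) ℝ) (i j : Fin n) (k : ℕ) : ℝ :=
  ∑ p : Fin (k + 1) → Fin n,
    if p 0 = i ∧ p (Fin.last k) = j ∧
        (∀ t : Fin (k + 1), t ≠ 0 → t ≠ Fin.last k → p t ≠ j)
      then pathProb T k p else 0

/-- Mean first passage time `m_{ij} = E F_{ij} = ∑ k k·Pr(F_{ij}=k)`. -/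
noncomputable def mfpt (T : Matrix (Fin n) (Fin n) ℝ) (i j : Fin n) : ℝ :=
  ∑' k : ℕ, (k : ℝ) * firstPassageProb T i j k

end MFPT

/-!
Each row of the Laplacian with the row and column of `j` deleted is `∑ₗ w v l • (e_v - e_l)`,
where `e_j = 0`. Expanding the determinant multilinearly in the rows gives a sum over all ways
`r` of choosing an out-neighbour of every vertex `v ≠ j`, of `∏ᵥ w v (r v)` times `det (1 - P)`,
where `P` is the `0/1` matrix of the partial successor function `r` on the vertices other than `j`.
That determinant is `1` if `r` has no cycle (then `P` is nilpotent) and `0` otherwise (the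
indicator of the vertices from which a cycle is reached lies in the kernel of `1 - P`); the
acyclic choices are exactly the spanning trees converging to `j`. For positivity, irreducibility
lets every vertex `v ≠ j` pick an arc of positive weight to a vertex from which `j` is reached in
fewer steps; these arcs form a tree of positive weight.
-/

open Finset Matrix Polynomial in
theorem Matrix.det_one_sub_of_isNilpotent {ι R : Type*} [Fintype ι] [DecidableEq ι] [CommRing R]
    [IsDomain R] {N : Matrix ι ι R} (hN : IsNilpotent N) : (1 - N).det = 1 := by
  obtain ⟨c, -, hc⟩ := Polynomial.isUnit_iff.mp (isUnit_charpolyRev_of_isNilpotent hN)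
  have hrev : N.charpolyRev = 1 := by
    have h0 := N.eval_charpolyRev
    rw [← hc, eval_C] at h0
    rw [← hc, h0, C_1]
  have hmap : ((X : R[X]) • N.map C).map (evalRingHom 1) = N := by ext; simp
  simpa [charpolyRev, ← coe_evalRingHom, RingHom.map_det, RingHom.mapMatrix_apply, Matrix.map_sub, hmap]
    using congrArg (eval 1) hrev

namespace MFPT

open Finset Matrix Relation

section StepMatrix

variable {R : Type*} {m : ℕ}

def stepMatrix (R : Type*) [Zero R] [One R] (s : Fin m → Option (Fin m)) :
    Matrix (Fin m) (Fin m) R :=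
  of fun a b => if s a = some b then 1 else 0

variable (s : Fin m → Option (Fin m))

lemma iterate_bind_none (k : ℕ) : (fun o => Option.bind o s)^[k] none = none :=
  Function.iterate_fixed rfl k

lemma iterate_bind_eq_none_of_le {i k : ℕ} (hik : i ≤ k) {o : Option (Fin m)}
    (h : (fun o => Option.bind o s)^[i] o = none) : (fun o => Option.bind o s)^[k] o = none := by
  obtain ⟨d, rfl⟩ := Nat.exists_eq_add_of_le hik
  rw [add_comm, Function.iterate_add_apply, h, iterate_bind_none]

lemma stepMatrix_pow_apply [Semiring R] (k : ℕ) (a b : Fin m) :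
    (stepMatrix R s ^ k) a b =
      if (fun o => Option.bind o s)^[k] (some a) = some b then 1 else 0 := by
  induction k generalizing a with
  | zero => simp [one_apply]
  | succ k ih =>
    rw [pow_succ', mul_apply, Function.iterate_succ_apply, Option.bind_some]
    cases hsa : s a with
    | none => simp [stepMatrix, hsa, iterate_bind_none]
    | some c => simpa [stepMatrix, hsa] using ih c

lemma transGen_of_iterate_bind {k : ℕ} {a b : Fin m}
    (h : (fun o => Option.bind o s)^[k + 1] (some a) = some b) : TransGen (Step s) a b := by
  induction k generalizing a with
  | zero => exact .single h
  | succ k ih =>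
    rw [Function.iterate_succ_apply, Option.bind_some] at h
    cases hsa : s a with
    | none => simp [hsa, iterate_bind_none] at h
    | some c => exact .head hsa (ih (by rwa [hsa] at h))

lemma iterate_bind_card_eq_none (hs : ∀ a, ¬ TransGen (Step s) a a) (a : Fin m) :
    (fun o => Option.bind o s)^[m] (some a) = none := by
  set f := fun o => Option.bind o s
  by_contra hm
  have hsome : ∀ i ∈ range (m + 1), f^[i] (some a) ∈ (univ.erase none : Finset (Option (Fin m))) :=
    fun i hi => mem_erase.2
      ⟨fun h => hm (iterate_bind_eq_none_of_le s (Nat.lt_succ_iff.1 (mem_range.1 hi)) h), mem_univ _⟩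
  have no_repeat : ∀ i ∈ range (m + 1), ∀ k, f^[i] (some a) ≠ f^[k + 1 + i] (some a) := by
    intro i hi k heq
    obtain ⟨x, hx⟩ := Option.ne_none_iff_exists'.1 (mem_erase.1 (hsome i hi)).1
    rw [Function.iterate_add_apply, hx] at heq
    exact hs x (transGen_of_iterate_bind s heq.symm)
  -- pigeonhole: `m + 1` iterates taking only the `m` values `some _`
  obtain ⟨i, hi, i', hi', hne, heq⟩ := exists_ne_map_eq_of_card_lt_of_maps_to (by simp) hsome
  rcases hne.lt_or_gt with hlt | hlt
  · obtain ⟨k, rfl⟩ := Nat.exists_eq_add_of_lt hlt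
    exact no_repeat i hi k (by rwa [add_comm i k, add_right_comm] at heq)
  · obtain ⟨k, rfl⟩ := Nat.exists_eq_add_of_lt hlt
    exact no_repeat i' hi' k (by rw [add_comm i' k, add_right_comm] at heq; exact heq.symm)

lemma isNilpotent_stepMatrix [Semiring R] (hs : ∀ a, ¬ TransGen (Step s) a a) :
    IsNilpotent (stepMatrix R s) :=
  ⟨m, by ext a b; simp [stepMatrix_pow_apply, iterate_bind_card_eq_none s hs]⟩

lemma reflTransGen_step_iff_of_cycle {a₀ : Fin m} (h₀ : TransGen (Step s) a₀ a₀) (b : Fin m) :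
    ReflTransGen (Step s) b a₀ ↔ ∃ c, s b = some c ∧ ReflTransGen (Step s) c a₀ := by
  refine ⟨fun hb => ?_, fun ⟨c, hbc, hc⟩ => .head hbc hc⟩
  rcases hb.cases_head with rfl | hb
  · exact TransGen.head'_iff.1 h₀
  · exact hb

lemma stepMatrix_mulVec_apply [NonAssocSemiring R] (x : Fin m → R) (a : Fin m) :
    (stepMatrix R s *ᵥ x) a = (s a).elim 0 x := by
  cases hsa : s a <;> simp [stepMatrix, mulVec, dotProduct, hsa]

lemma det_one_sub_stepMatrix_of_cycle [CommRing R] [IsDomain R] {a₀ : Fin m}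
    (h₀ : TransGen (Step s) a₀ a₀) : (1 - stepMatrix R s).det = 0 := by
  set x : Fin m → R := fun b => if ReflTransGen (Step s) b a₀ then 1 else 0
  refine exists_mulVec_eq_zero_iff.1 ⟨x, fun hx => ?_, ?_⟩
  · simpa [x, ReflTransGen.refl] using congrFun hx a₀
  ext b
  rw [sub_mulVec, one_mulVec, Pi.sub_apply, stepMatrix_mulVec_apply, Pi.zero_apply, sub_eq_zero]
  cases hsb : s b <;> simp [x, reflTransGen_step_iff_of_cycle s h₀ b, hsb]

theorem det_one_sub_stepMatrix [CommRing R] [IsDomain R] :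
    (1 - stepMatrix R s).det = if ∃ a, TransGen (Step s) a a then 0 else 1 := by
  split_ifs with h
  · exact det_one_sub_stepMatrix_of_cycle s h.choose_spec
  · exact det_one_sub_of_isNilpotent (isNilpotent_stepMatrix s (not_exists.1 h))

end StepMatrix

section ChoiceForest

variable {n : ℕ} (j : Fin (n + 1)) (r : Fin n → Fin (n + 1))

def choiceForest : Fin (n + 1) → Option (Fin (n + 1)) :=
  Fin.insertNth j none fun a => some (r a)

def choiceSucc : Fin n → Option (Fin n) :=
  fun a => finSuccEquiv' j (r a)

@[simp] lemma choiceForest_self : choiceForest j r j = none :=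
  Fin.insertNth_apply_same _ _ _

@[simp] lemma choiceForest_succAbove (a : Fin n) :
    choiceForest j r (j.succAbove a) = some (r a) :=
  Fin.insertNth_apply_succAbove _ _ _ _

lemma choiceForest_eq_some_iff {v u : Fin (n + 1)} :
    choiceForest j r v = some u ↔ ∃ a, j.succAbove a = v ∧ r a = u := by
  rcases Fin.eq_self_or_eq_succAbove j v with rfl | ⟨a, rfl⟩ <;> simp

lemma choiceForest_injective : Function.Injective (choiceForest (r := ·) j) :=
  fun r r' h => funext fun a => by simpa using congrFun h (j.succAbove a)

lemma step_choiceSucc_iff {a b : Fin n} : Step (choiceSucc j r) a b ↔ r a = j.succAbove b := by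
  rw [Step, choiceSucc, ← finSuccEquiv'_symm_some, Equiv.eq_symm_apply]

lemma transGen_choiceSucc_iff {a b : Fin n} :
    TransGen (Step (choiceSucc j r)) a b ↔
      TransGen (Step (choiceForest j r)) (j.succAbove a) (j.succAbove b) := by
  refine ⟨fun h => TransGen.lift j.succAbove (fun a b h => ?_) _ _ h, fun h => ?_⟩
  · simpa [Step, Function.onFun] using (step_choiceSucc_iff j r).1 h
  obtain ⟨v, hv⟩ : ∃ v, v = j.succAbove a := ⟨_, rfl⟩
  rw [← hv] at h
  induction h using TransGen.head_induction_on generalizing a with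
  | single h =>
    subst hv
    exact .single ((step_choiceSucc_iff j r).2 (by simpa [Step] using h))
  | @head v c hvc hc ih =>
    subst hv
    obtain ⟨d, rfl, -⟩ :=
      (choiceForest_eq_some_iff j r).1 (TransGen.head'_iff.1 hc).choose_spec.1
    exact .head ((step_choiceSucc_iff j r).2 (by simpa [Step] using hvc)) (ih rfl)

lemma exists_transGen_choiceForest_iff :
    (∃ v, TransGen (Step (choiceForest j r)) v v) ↔
      ∃ a, TransGen (Step (choiceSucc j r)) a a := by
  refine ⟨fun ⟨v, hv⟩ => ?_, fun ⟨a, ha⟩ => ⟨_, (transGen_choiceSucc_iff j r).1 ha⟩⟩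
  obtain ⟨a, rfl, -⟩ := (choiceForest_eq_some_iff j r).1 (TransGen.head'_iff.1 hv).choose_spec.1
  exact ⟨a, (transGen_choiceSucc_iff j r).2 hv⟩

lemma arcCount_eq_iff {F : Fin (n + 1) → Option (Fin (n + 1))} (hj : F j = none) :
    arcCount F = n ↔ ∀ a, (F (j.succAbove a)).isSome := by
  have hsub : univ.filter (fun v => (F v).isSome) ⊆ univ.erase j := fun v hv =>
    mem_erase.2 ⟨by rintro rfl; simp [hj] at hv, mem_univ _⟩
  have hcard : #(univ.erase j) = n := by simp
  calc arcCount F = n ↔ #(univ.erase j) ≤ arcCount F := by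
        rw [hcard]; exact ⟨ge_of_eq, le_antisymm ((card_le_card hsub).trans hcard.le)⟩
    _ ↔ univ.filter (fun v => (F v).isSome) = univ.erase j := eq_iff_card_le_of_subset hsub
    _ ↔ ∀ a, (F (j.succAbove a)).isSome := by
        rw [Finset.ext_iff, Fin.forall_iff_succAbove j]; simp [hj]

end ChoiceForest

section MatrixTree

variable {n : ℕ} (w : Matrix (Fin (n + 1)) (Fin (n + 1)) ℝ) (j : Fin (n + 1))

lemma forestWeight_choiceForest (r : Fin n → Fin (n + 1)) :
    forestWeight w (choiceForest j r) = ∏ a, w (j.succAbove a) (r a) := by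
  simp [forestWeight, Fin.prod_univ_succAbove _ j]

lemma treeWeight_eq_sum_choiceForest :
    treeWeight w j = ∑ r : Fin n → Fin (n + 1),
      if IsInForest w (choiceForest j r) then forestWeight w (choiceForest j r) else 0 := by
  refine (Fintype.sum_of_injective _ (choiceForest_injective j) _ _ (fun F hF => ?_)
    fun r => ?_).symm
  · refine if_neg fun ⟨_, hcount, hj⟩ => hF ?_
    have hsome := (arcCount_eq_iff j hj).1 (by simpa using hcount)
    refine ⟨fun a => (F (j.succAbove a)).get (hsome a), funext fun v => ?_⟩
    rcases Fin.eq_self_or_eq_succAbove j v with rfl | ⟨a, rfl⟩ <;> simp [hj]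
  · simp [(arcCount_eq_iff j (choiceForest_self j r)).2 (by simp)]

lemma ite_isInForest_choiceForest (hw : ∀ i k, 0 ≤ w i k) (r : Fin n → Fin (n + 1)) :
    (if IsInForest w (choiceForest j r) then forestWeight w (choiceForest j r) else 0) =
      (∏ a, w (j.succAbove a) (r a)) * (1 - stepMatrix ℝ (choiceSucc j r)).det := by
  rw [det_one_sub_stepMatrix, forestWeight_choiceForest]
  by_cases hcyc : ∃ a, TransGen (Step (choiceSucc j r)) a a
  · obtain ⟨v, hv⟩ := (exists_transGen_choiceForest_iff j r).2 hcyc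
    rw [if_pos hcyc, mul_zero, if_neg fun hF => hF.2 v hv]
  rw [if_neg hcyc, mul_one, ite_eq_left_iff]
  refine fun hF => by_contra fun hprod => hF ⟨fun v u h => ?_, fun v hv => ?_⟩
  · obtain ⟨a, rfl, rfl⟩ := (choiceForest_eq_some_iff j r).1 h
    refine ⟨fun hloop => hcyc ⟨a, .single ((step_choiceSucc_iff j r).2 hloop.symm)⟩, ?_⟩
    exact (hw _ _).lt_of_ne (prod_ne_zero_iff.1 (Ne.symm hprod) a (mem_univ a)).symm
  · exact hcyc ((exists_transGen_choiceForest_iff j r).1 ⟨v, hv⟩)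

/-- Row `a` of `1 - stepMatrix (choiceSucc j fun _ => l)` is `e_a - e_l`, with `e_j = 0`. -/
lemma lap_submatrix_succAbove :
    (lap w).submatrix j.succAbove j.succAbove =
      fun a => ∑ l, w (j.succAbove a) l • (1 - stepMatrix ℝ (choiceSucc j fun _ => l)) a := by
  ext a b
  simp [lap, stepMatrix, choiceSucc, Matrix.sub_apply, one_apply, Finset.sum_apply, mul_sub]
  split_ifs with hab
  · rw [hab]
  · ring

theorem det_lap_submatrix_succAbove :
    ((lap w).submatrix j.succAbove j.succAbove).det =
      ∑ r : Fin n → Fin (n + 1),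
        (∏ a, w (j.succAbove a) (r a)) * (1 - stepMatrix ℝ (choiceSucc j r)).det := by
  rw [lap_submatrix_succAbove]
  refine (detRowAlternating.toMultilinearMap.map_sum _).trans (sum_congr rfl fun r _ => ?_)
  exact det_mul_column (fun a => w (j.succAbove a) (r a)) (1 - stepMatrix ℝ (choiceSucc j r))

theorem treeWeight_eq_det_lap_submatrix {w : Matrix (Fin (n + 1)) (Fin (n + 1)) ℝ}
    (hw : ∀ i k, 0 ≤ w i k) (j : Fin (n + 1)) :
    treeWeight w j = ((lap w).submatrix j.succAbove j.succAbove).det := by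
  rw [treeWeight_eq_sum_choiceForest, det_lap_submatrix_succAbove]
  exact sum_congr rfl fun r _ => ite_isInForest_choiceForest w j hw r

end MatrixTree

lemma lap_eq_one_sub {m : ℕ} {T : Matrix (Fin m) (Fin m) ℝ} (hT : ∀ i, ∑ k, T i k = 1) :
    lap T = 1 - T := by
  ext i k
  by_cases hik : i = k
  · subst hik; simp [lap, sum_erase_eq_sub, hT]
  · simp [lap, hik, one_apply]

section Positivity

variable {m : ℕ} {w : Matrix (Fin m) (Fin m) ℝ}

lemma forestWeight_pos {F : Fin m → Option (Fin m)} (hF : IsInForest w F) :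
    0 < forestWeight w F :=
  prod_pos fun v _ => by
    cases hv : F v with
    | none => exact one_pos
    | some u => exact (hF.1 v u hv).2

lemma isInForest_of_strictAnti {F : Fin m → Option (Fin m)} (d : Fin m → ℕ)
    (harc : ∀ v u, F v = some u → 0 < w v u ∧ d u < d v) : IsInForest w F := by
  have hdec : ∀ v u, TransGen (Step F) v u → d u < d v := fun v u h => by
    induction h with
    | single h => exact (harc _ _ h).2
    | tail _ h ih => exact (harc _ _ h).2.trans ih
  exact ⟨fun v u h => ⟨fun hvu => (harc v u h).2.ne (hvu ▸ rfl), (harc v u h).1⟩,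
    fun v hv => (hdec v v hv).false⟩

lemma exists_pos_and_find_lt (hw : ∀ i k, 0 ≤ w i k) {j : Fin m}
    (hreach : ∀ i, ∃ k, 0 < (w ^ k) i j) {i : Fin m} (hij : i ≠ j) :
    ∃ u, 0 < w i u ∧ Nat.find (hreach u) < Nat.find (hreach i) := by
  have hpos := Nat.find_spec (hreach i)
  obtain ⟨k, hk⟩ : ∃ k, Nat.find (hreach i) = k + 1 := by
    refine Nat.exists_eq_succ_of_ne_zero fun h0 => ?_
    simp [h0, one_apply_ne hij] at hpos
  rw [hk, pow_succ', mul_apply] at hpos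
  obtain ⟨u, -, hu⟩ := exists_lt_of_sum_lt (s := univ) (f := fun _ => 0)
    (g := fun u => w i u * (w ^ k) u j) (by rwa [sum_const_zero])
  obtain ⟨hiu, huj⟩ := (pos_and_pos_or_neg_and_neg_of_mul_pos hu).resolve_right
    fun h => (hw i u).not_gt h.1
  exact ⟨u, hiu, hk ▸ Nat.lt_succ_of_le (Nat.find_min' _ huj)⟩

end Positivity

lemma treeWeight_pos {n : ℕ} {w : Matrix (Fin (n + 1)) (Fin (n + 1)) ℝ} (hw : ∀ i k, 0 ≤ w i k)
    {j : Fin (n + 1)} (hreach : ∀ i, ∃ k, 0 < (w ^ k) i j) : 0 < treeWeight w j := by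
  choose r hr using fun a => exists_pos_and_find_lt hw hreach (Fin.succAbove_ne j a)
  have hF : IsInForest w (choiceForest j r) :=
    isInForest_of_strictAnti (fun i => Nat.find (hreach i)) fun v u h => by
      obtain ⟨a, rfl, rfl⟩ := (choiceForest_eq_some_iff j r).1 h
      exact hr a
  rw [treeWeight_eq_sum_choiceForest]
  refine sum_pos' (fun r' _ => ?_) ⟨r, mem_univ _, by simpa [hF] using forestWeight_pos hF⟩
  split_ifs with h
  exacts [(forestWeight_pos h).le, le_rfl]

/-- directed matrix-tree theorem for `L = I - T`. `q_j` equals the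
`(j,j)` cofactor of `L` and is strictly positive. -/
theorem treeWeight_eq_cofactor {n : ℕ} (T : Matrix (Fin (n + 1)) (Fin (n + 1)) ℝ)
    (hS : IsStochastic T) (hIrr : IsIrreducible T) :
    ∀ j, treeWeight T j =
        Matrix.det (((1 : Matrix (Fin (n + 1)) (Fin (n + 1)) ℝ) - T).submatrix
          j.succAbove j.succAbove) ∧
      0 < treeWeight T j := by
  intro j
  rw [← lap_eq_one_sub hS.2]
  exact ⟨treeWeight_eq_det_lap_submatrix hS.1 j, treeWeight_pos hS.1 fun i => hIrr i j⟩

end MFPT
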